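/- Let C be the operator (CQ)(t) := cos²(πt/2) Q(t/4) + sin²(πt/2) Q((t−1)/4), acting on W₀ = { Q ∈ C¹([−1/3, 0]) : Q(0) = 1 } with metric d(Q₁,Q₂) = sup_{t∈[−1/3,0]} |Q₁'(t) − Q₂'(t)|. Then C maps W₀ into W₀ and d(C(Q₁), C(Q₂)) ≤ (1/4 + π√3/16) d(Q₁,Q₂) for all Q₁, Q₂ ∈ W₀; in particular C is a strict contraction on the complete metric space (W₀, d). -/

import Mathlib

/-!
Write `D = Q₁ - Q₂`. Since `C` is linear, `(CQ₁)' - (CQ₂)' = (CD)'`, and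
`(CD)'(t) = π sin(πt/2) cos(πt/2) (D((t-1)/4) - D(t/4)) + (cos² D'(t/4) + sin² D'((t-1)/4)) / 4`.
Both `t/4` and `(t-1)/4` lie in `[-1/3, 0]` when `t` does, so the second term is a convex
combination of values of `D'` bounded by `M = sup |D'|`, and by the mean value theorem the
difference `D((t-1)/4) - D(t/4)` is at most `M/4`. On `[-1/3, 0]` we have
`|sin(πt/2) cos(πt/2)| = |sin(πt)|/2 ≤ √3/4`, whence `|(CD)'(t)| ≤ (1/4 + π√3/16) M`.
-/

open Set

/-- The transfer operator `(CQ)(t) = cos²(πt/2) Q(t/4) + sin²(πt/2) Q((t−1)/4)`. -/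
noncomputable def Cop (Q : ℝ → ℝ) (t : ℝ) : ℝ :=
  Real.cos (Real.pi * t / 2) ^ 2 * Q (t / 4) + Real.sin (Real.pi * t / 2) ^ 2 * Q ((t - 1) / 4)

lemma Cop_sub (Q₁ Q₂ : ℝ → ℝ) : Cop Q₁ - Cop Q₂ = Cop (Q₁ - Q₂) := by
  ext t
  simp only [Cop, Pi.sub_apply]
  ring

lemma Cop_apply_zero (Q : ℝ → ℝ) : Cop Q 0 = Q 0 := by
  simp [Cop]

lemma contDiff_Cop {n : WithTop ℕ∞} {Q : ℝ → ℝ} (hQ : ContDiff ℝ n Q) :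
    ContDiff ℝ n (Cop Q) := by
  have harg : ContDiff ℝ n (fun t : ℝ => Real.pi * t / 2) := by fun_prop
  have hcos := (Real.contDiff_cos.of_le le_top).comp harg
  have hsin := (Real.contDiff_sin.of_le le_top).comp harg
  exact ((hcos.pow 2).mul (hQ.comp (contDiff_id.div_const 4))).add
    ((hsin.pow 2).mul (hQ.comp ((contDiff_id.sub contDiff_const).div_const 4)))

lemma hasDerivAt_Cop {Q : ℝ → ℝ} (hQ : Differentiable ℝ Q) (t : ℝ) :
    HasDerivAt (Cop Q)
      (Real.pi * (Real.sin (Real.pi * t / 2) * Real.cos (Real.pi * t / 2)) *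
          (Q ((t - 1) / 4) - Q (t / 4)) +
        (Real.cos (Real.pi * t / 2) ^ 2 * deriv Q (t / 4) +
          Real.sin (Real.pi * t / 2) ^ 2 * deriv Q ((t - 1) / 4)) / 4) t := by
  have harg : HasDerivAt (fun t : ℝ => Real.pi * t / 2) (Real.pi / 2) t := by
    simpa using ((hasDerivAt_id t).const_mul Real.pi).div_const 2
  have hcos := (Real.hasDerivAt_cos _).comp t harg
  have hsin := (Real.hasDerivAt_sin _).comp t harg
  have hQ₁ : HasDerivAt (fun t : ℝ => Q (t / 4)) (deriv Q (t / 4) * (1 / 4)) t :=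
    (hQ _).hasDerivAt.comp t ((hasDerivAt_id t).div_const 4)
  have hQ₂ : HasDerivAt (fun t : ℝ => Q ((t - 1) / 4)) (deriv Q ((t - 1) / 4) * (1 / 4)) t :=
    (hQ _).hasDerivAt.comp t (((hasDerivAt_id t).sub_const 1).div_const 4)
  refine (((hcos.fun_pow 2).fun_mul hQ₁).fun_add ((hsin.fun_pow 2).fun_mul hQ₂)).congr_deriv ?_
  simp only [Function.comp_apply, Nat.cast_ofNat]
  ring

lemma abs_sin_mul_cos_le_of_mem_Icc {t : ℝ} (ht : t ∈ Icc (-(1 / 3) : ℝ) 0) :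
    |Real.sin (Real.pi * t / 2) * Real.cos (Real.pi * t / 2)| ≤ Real.sqrt 3 / 4 := by
  obtain ⟨ht₁, ht₂⟩ := ht
  have hpi := Real.pi_pos
  have hdouble : Real.sin (Real.pi * t / 2) * Real.cos (Real.pi * t / 2)
      = Real.sin (Real.pi * t) / 2 := by
    have h := Real.sin_two_mul (Real.pi * t / 2)
    rw [mul_div_cancel₀ _ two_ne_zero] at h
    linarith
  have hupper : Real.sin (Real.pi * t) ≤ 0 :=
    Real.sin_nonpos_of_nonpos_of_neg_pi_le (by nlinarith) (by nlinarith)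
  have hlower : -(Real.sqrt 3 / 2) ≤ Real.sin (Real.pi * t) := by
    rw [← Real.sin_pi_div_three, ← Real.sin_neg]
    exact Real.sin_le_sin_of_le_of_le_pi_div_two (by linarith) (by nlinarith) (by nlinarith)
  rw [hdouble, abs_div, abs_two, abs_of_nonpos hupper]
  linarith

lemma abs_sq_mul_add_sq_mul_le {c s a b M : ℝ} (hcs : c ^ 2 + s ^ 2 = 1)
    (ha : |a| ≤ M) (hb : |b| ≤ M) : |c ^ 2 * a + s ^ 2 * b| ≤ M :=
  calc |c ^ 2 * a + s ^ 2 * b| ≤ c ^ 2 * |a| + s ^ 2 * |b| :=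
        (abs_add_le _ _).trans_eq (by rw [abs_mul, abs_mul, abs_sq, abs_sq])
    _ ≤ c ^ 2 * M + s ^ 2 * M := by gcongr
    _ = M := by linear_combination M * hcs

lemma abs_deriv_Cop_le {D : ℝ → ℝ} (hD : Differentiable ℝ D) {M : ℝ}
    (hM : ∀ s ∈ Icc (-(1 / 3) : ℝ) 0, |deriv D s| ≤ M) {t : ℝ}
    (ht : t ∈ Icc (-(1 / 3) : ℝ) 0) :
    |deriv (Cop D) t| ≤ (1 / 4 + Real.pi * Real.sqrt 3 / 16) * M := by
  have hmem₁ : t / 4 ∈ Icc (-(1 / 3) : ℝ) 0 := ⟨by linarith [ht.1], by linarith [ht.2]⟩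
  have hmem₂ : (t - 1) / 4 ∈ Icc (-(1 / 3) : ℝ) 0 := ⟨by linarith [ht.1], by linarith [ht.2]⟩
  have hmvt : |D ((t - 1) / 4) - D (t / 4)| ≤ M / 4 := by
    have := (convex_Icc (-(1 / 3) : ℝ) 0).norm_image_sub_le_of_norm_deriv_le
      (fun z _ => hD z) hM hmem₁ hmem₂
    rwa [Real.norm_eq_abs, Real.norm_eq_abs, show (t - 1) / 4 - t / 4 = -(1 / 4) by ring,
      abs_neg, abs_of_pos (by norm_num : (0 : ℝ) < 1 / 4), ← div_eq_mul_one_div] at this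
  have hconv := abs_sq_mul_add_sq_mul_le (Real.cos_sq_add_sin_sq (Real.pi * t / 2))
    (hM _ hmem₁) (hM _ hmem₂)
  have hsc := abs_sin_mul_cos_le_of_mem_Icc ht
  rw [(hasDerivAt_Cop hD t).deriv]
  calc _ ≤ Real.pi * (Real.sqrt 3 / 4) * (M / 4) + M / 4 := by
        refine (abs_add_le _ _).trans (add_le_add ?_ ?_)
        · rw [abs_mul, abs_mul, abs_of_pos Real.pi_pos]
          gcongr
        · rw [abs_div, abs_of_pos (by norm_num : (0 : ℝ) < 4)]
          gcongr
    _ = (1 / 4 + Real.pi * Real.sqrt 3 / 16) * M := by ring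

lemma contraction_constant_lt_one : (1 / 4 + Real.pi * Real.sqrt 3 / 16 : ℝ) < 1 := by
  have hsqrt : Real.sqrt 3 < 2 := by
    rw [Real.sqrt_lt' two_pos]
    norm_num
  nlinarith [Real.pi_lt_d2, Real.sqrt_nonneg 3, Real.pi_pos]

theorem Cop_strict_contraction_general (Q₁ Q₂ : ℝ → ℝ)
    (hQ₁ : ContDiff ℝ 1 Q₁) (hQ₂ : ContDiff ℝ 1 Q₂)
    (hQ₁0 : Q₁ 0 = 1) :
    Cop Q₁ 0 = 1 ∧ ContDiff ℝ 1 (Cop Q₁) ∧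
    sSup ((fun t => |deriv (Cop Q₁) t - deriv (Cop Q₂) t|) '' Icc (-(1/3) : ℝ) 0)
      ≤ (1 / 4 + Real.pi * Real.sqrt 3 / 16) *
          sSup ((fun t => |deriv Q₁ t - deriv Q₂ t|) '' Icc (-(1/3) : ℝ) 0) ∧
    (1 / 4 + Real.pi * Real.sqrt 3 / 16 : ℝ) < 1 := by
  have hd₁ := hQ₁.differentiable one_ne_zero
  have hd₂ := hQ₂.differentiable one_ne_zero
  have hderiv_sub : ∀ t, deriv Q₁ t - deriv Q₂ t = deriv (Q₁ - Q₂) t :=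
    fun t => (deriv_sub (hd₁ t) (hd₂ t)).symm
  have hderiv_Cop_sub : ∀ t, deriv (Cop Q₁) t - deriv (Cop Q₂) t = deriv (Cop (Q₁ - Q₂)) t :=
    fun t => by rw [← Cop_sub, deriv_sub ((hasDerivAt_Cop hd₁ t).differentiableAt)
      ((hasDerivAt_Cop hd₂ t).differentiableAt)]
  refine ⟨by rw [Cop_apply_zero, hQ₁0], contDiff_Cop hQ₁, ?_, contraction_constant_lt_one⟩
  set S := (fun t => |deriv Q₁ t - deriv Q₂ t|) '' Icc (-(1/3) : ℝ) 0
  have hbdd : BddAbove S := isCompact_Icc.bddAbove_image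
    ((hQ₁.continuous_deriv le_rfl).sub (hQ₂.continuous_deriv le_rfl)).abs.continuousOn
  have hM : ∀ s ∈ Icc (-(1 / 3) : ℝ) 0, |deriv (Q₁ - Q₂) s| ≤ sSup S :=
    fun s hs => hderiv_sub s ▸ le_csSup hbdd ⟨s, hs, rfl⟩
  refine Real.sSup_le ?_ ?_
  · rintro _ ⟨t, ht, rfl⟩
    dsimp only
    rw [hderiv_Cop_sub]
    exact abs_deriv_Cop_le (hd₁.sub hd₂) hM ht
  · have hS : 0 ≤ sSup S := (abs_nonneg _).trans (hM 0 ⟨by norm_num, le_rfl⟩)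
    positivity

/-- `C` maps `W₀ = {Q ∈ C¹ : Q(0) = 1}` into itself and is a strict contraction with constant
`1/4 + π√3/16 < 1` for the metric `d(Q₁,Q₂) = sup_{t∈[−1/3,0]} |Q₁'(t) − Q₂'(t)|`. -/
theorem Cop_strict_contraction (Q₁ Q₂ : ℝ → ℝ)
    (hQ₁ : ContDiff ℝ 1 Q₁) (hQ₂ : ContDiff ℝ 1 Q₂)
    (hQ₁0 : Q₁ 0 = 1) (hQ₂0 : Q₂ 0 = 1) :
    Cop Q₁ 0 = 1 ∧ ContDiff ℝ 1 (Cop Q₁) ∧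
    sSup ((fun t => |deriv (Cop Q₁) t - deriv (Cop Q₂) t|) '' Icc (-(1/3) : ℝ) 0)
      ≤ (1 / 4 + Real.pi * Real.sqrt 3 / 16) *
          sSup ((fun t => |deriv Q₁ t - deriv Q₂ t|) '' Icc (-(1/3) : ℝ) 0) ∧
    (1 / 4 + Real.pi * Real.sqrt 3 / 16 : ℝ) < 1 :=
  Cop_strict_contraction_general Q₁ Q₂ hQ₁ hQ₂ hQ₁0
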